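/- Assume for every z that f_z is convex, differentiable with ‖∇f_z w‖ ≤ L for all w (L > 0), and that ∇f_z is β-Lipschitz (β > 0); let λ ∈ [0,1) be a consensus rate for P and let the stepsize be constant, η t = η for all t ≥ 1, with 0 ≤ η ≤ 2/β. Then for every T ≥ 1, (1/(m*n)) * ∑_{r : Fin m} ∑_{k : Fin n} ‖w̄_S T - w̄_{S_{rk}} T‖ ≤ 4*η^2*β*L*T/(1-λ) + 2*η*L*T/(m*n). -/

import Mathlib

section DSGDAux
open scoped RealInnerProductSpace
open Gradient

variable {F : Type*} [NormedAddCommGroup F] [InnerProductSpace ℝ F] [CompleteSpace F]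

lemma grad_inner_eq {f : F → ℝ} (hf : Differentiable ℝ f) (p v : F) :
    fderiv ℝ f p v = ⟪gradient f p, v⟫ := by
  have h := (hf p).hasGradientAt.hasFDerivAt
  rw [h.fderiv]
  simp [InnerProductSpace.toDual_apply_apply]

lemma line_hasDerivAt {f : F → ℝ} (hf : Differentiable ℝ f) (x v : F) (t : ℝ) :
    HasDerivAt (fun s : ℝ => f (x + s • v)) ⟪gradient f (x + t • v), v⟫ t := by
  have hline : HasDerivAt (fun s : ℝ => x + s • v) v t := by
    simpa using ((hasDerivAt_id t).smul_const v).const_add x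
  have := (hf (x + t • v)).hasFDerivAt.comp_hasDerivAt t hline
  rw [← grad_inner_eq hf]
  exact this

lemma convex_first_order {f : F → ℝ} (hc : ConvexOn ℝ Set.univ f)
    (hf : Differentiable ℝ f) (x y : F) :
    f x + ⟪gradient f x, y - x⟫ ≤ f y := by
  set v := y - x with hv
  have hg : ∀ t : ℝ, HasDerivAt (fun s : ℝ => f (x + s • v)) ⟪gradient f (x + t • v), v⟫ t :=
    line_hasDerivAt hf x v
  have hconv : ConvexOn ℝ Set.univ (fun s : ℝ => f (x + s • v)) := by
    have := hc.comp_affineMap (AffineMap.const ℝ ℝ x + LinearMap.toAffineMap (LinearMap.toSpanSingleton ℝ F v))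
    exact this.congr (fun s _ => by simp [LinearMap.toSpanSingleton_apply])
  have h01 : (0 : ℝ) < 1 := one_pos
  have hslope := hconv.le_slope_of_hasDerivAt (Set.mem_univ (0:ℝ)) (Set.mem_univ (1:ℝ)) h01
      (by simpa using hg 0)
  have : ⟪gradient f x, v⟫ ≤ f (x + (1:ℝ) • v) - f (x + (0:ℝ) • v) := by
    have := hslope
    rw [slope_def_field] at this
    simpa [div_one] using this
  simp only [one_smul, zero_smul, add_zero] at this
  have hxy : x + v = y := by rw [hv]; abel
  rw [hxy] at this
  linarith

lemma descent_lemma {f : F → ℝ} (hf : Differentiable ℝ f) {β : ℝ} (hβ : 0 < β)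
    (hlip : ∀ a b : F, ‖gradient f a - gradient f b‖ ≤ β * ‖a - b‖) (x y : F) :
    f y ≤ f x + ⟪gradient f x, y - x⟫ + β / 2 * ‖y - x‖ ^ 2 := by
  set v := y - x with hv
  set g' : ℝ → ℝ := fun t => ⟪gradient f (x + t • v), v⟫ with hg'
  have hgrad_cont : Continuous (gradient f) := by
    have : LipschitzWith β.toNNReal (gradient f) := by
      refine LipschitzWith.of_dist_le_mul fun a b => ?_
      rw [dist_eq_norm, dist_eq_norm]
      calc ‖gradient f a - gradient f b‖ ≤ β * ‖a - b‖ := hlip a b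
        _ ≤ β.toNNReal * ‖a - b‖ := by
            gcongr; exact Real.le_coe_toNNReal β
    exact this.continuous
  have hcont : Continuous g' := by
    apply Continuous.inner
    · exact hgrad_cont.comp (by continuity)
    · exact continuous_const
  have hftc : ∫ t in (0:ℝ)..1, g' t = f (x + (1:ℝ) • v) - f (x + (0:ℝ) • v) := by
    apply intervalIntegral.integral_eq_sub_of_hasDerivAt (f := fun s : ℝ => f (x + s • v))
    · intro t _
      exact line_hasDerivAt hf x v t
    · exact hcont.intervalIntegrable 0 1
  have hbound : ∀ t ∈ Set.Icc (0:ℝ) 1, g' t ≤ g' 0 + β * ‖v‖ ^ 2 * t := by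
    intro t ht
    have h1 : g' t - g' 0 = ⟪gradient f (x + t • v) - gradient f (x + (0:ℝ) • v), v⟫ := by
      rw [inner_sub_left]
    have h2 : ‖gradient f (x + t • v) - gradient f (x + (0:ℝ) • v)‖ ≤ β * (t * ‖v‖) := by
      calc _ ≤ β * ‖(x + t • v) - (x + (0:ℝ) • v)‖ := hlip _ _
        _ = β * (|t| * ‖v‖) := by
            congr 1
            simp [norm_smul, abs_of_nonneg ht.1]
        _ = β * (t * ‖v‖) := by rw [abs_of_nonneg ht.1]
    have h3 : g' t - g' 0 ≤ β * (t * ‖v‖) * ‖v‖ := by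
      rw [h1]
      calc ⟪gradient f (x + t • v) - gradient f (x + (0:ℝ) • v), v⟫
          ≤ ‖gradient f (x + t • v) - gradient f (x + (0:ℝ) • v)‖ * ‖v‖ :=
            real_inner_le_norm _ _
        _ ≤ β * (t * ‖v‖) * ‖v‖ := by gcongr
    nlinarith [sq_nonneg ‖v‖]
  have hint : ∫ t in (0:ℝ)..1, g' t ≤ ∫ t in (0:ℝ)..1, (g' 0 + β * ‖v‖ ^ 2 * t) := by
    apply intervalIntegral.integral_mono_on (by norm_num)
    · exact hcont.intervalIntegrable 0 1
    · exact (by continuity : Continuous fun t : ℝ => g' 0 + β * ‖v‖ ^ 2 * t).intervalIntegrable 0 1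
    · exact hbound
  have heval : ∫ t in (0:ℝ)..1, (g' 0 + β * ‖v‖ ^ 2 * t) = g' 0 + β / 2 * ‖v‖ ^ 2 := by
    rw [intervalIntegral.integral_add (intervalIntegrable_const)
      ((intervalIntegral.intervalIntegrable_id).const_mul _),
      intervalIntegral.integral_const, intervalIntegral.integral_const_mul,
      integral_id]
    simp
    ring
  have h0 : g' 0 = ⟪gradient f x, v⟫ := by simp [hg']
  have hx1 : x + (1:ℝ) • v = y := by rw [hv]; simp
  have hx0 : x + (0:ℝ) • v = x := by simp
  rw [hx1, hx0] at hftc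
  linarith [hint.trans_eq heval, hftc.symm.le, hftc.le]

lemma hasGradientAt_inner_const (a x : F) :
    HasGradientAt (fun w : F => ⟪a, w⟫) a x := by
  rw [hasGradientAt_iff_hasFDerivAt]
  have : InnerProductSpace.toDual ℝ F a = innerSL ℝ a := by
    ext w; simp [InnerProductSpace.toDual_apply_apply]
  rw [this]
  exact (innerSL ℝ a).hasFDerivAt

lemma hasGradientAt_sub {f g : F → ℝ} {a b x : F}
    (hf : HasGradientAt f a x) (hg : HasGradientAt g b x) :
    HasGradientAt (fun w => f w - g w) (a - b) x := by
  rw [hasGradientAt_iff_hasFDerivAt] at *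
  rw [map_sub]; exact hf.sub hg

lemma inner_convexOn (a : F) : ConvexOn ℝ Set.univ (fun w : F => ⟪a, w⟫) := by
  refine ⟨convex_univ, fun x _ y _ p q _ _ _ => ?_⟩
  simp [inner_add_right, inner_smul_right]

lemma coco_half {f : F → ℝ} (hc : ConvexOn ℝ Set.univ f) (hf : Differentiable ℝ f)
    {β : ℝ} (hβ : 0 < β)
    (hlip : ∀ a b : F, ‖gradient f a - gradient f b‖ ≤ β * ‖a - b‖) (x y : F) :
    1 / (2 * β) * ‖gradient f y - gradient f x‖ ^ 2 ≤ f y - f x - ⟪gradient f x, y - x⟫ := by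
  set φ : F → ℝ := fun w => f w - ⟪gradient f x, w⟫ with hφ
  have hφgrad : ∀ w, HasGradientAt φ (gradient f w - gradient f x) w := fun w =>
    hasGradientAt_sub (hf w).hasGradientAt (hasGradientAt_inner_const _ w)
  have hφgrad_eq : ∀ w, gradient φ w = gradient f w - gradient f x := fun w =>
    (hφgrad w).gradient
  have hφdiff : Differentiable ℝ φ := fun w => (hφgrad w).differentiableAt
  have hφconv : ConvexOn ℝ Set.univ φ := by
    have h := hc.add (inner_convexOn (-(gradient f x)))
    have : φ = fun w => f w + ⟪-(gradient f x), w⟫ := by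
      funext w; simp [hφ, inner_neg_left, sub_eq_add_neg]
    rw [this]; exact h
  have hφlip : ∀ a b : F, ‖gradient φ a - gradient φ b‖ ≤ β * ‖a - b‖ := by
    intro a b
    rw [hφgrad_eq, hφgrad_eq]
    simpa using hlip a b
  -- φ is minimized at x since ∇φ x = 0
  set z := y - β⁻¹ • (gradient f y - gradient f x) with hz
  have hmin : φ x ≤ φ z := by
    have := convex_first_order hφconv hφdiff x z
    rw [hφgrad_eq] at this
    simpa using this
  have hdesc : φ z ≤ φ y + ⟪gradient φ y, z - y⟫ + β / 2 * ‖z - y‖ ^ 2 :=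
    descent_lemma hφdiff hβ hφlip y z
  rw [hφgrad_eq] at hdesc
  have hzy : z - y = -(β⁻¹ • (gradient f y - gradient f x)) := by rw [hz]; abel
  rw [hzy] at hdesc
  have e1 : ⟪gradient f y - gradient f x, -(β⁻¹ • (gradient f y - gradient f x))⟫
      = -(β⁻¹ * ‖gradient f y - gradient f x‖ ^ 2) := by
    rw [inner_neg_right, real_inner_smul_right, real_inner_self_eq_norm_sq]
  have e2 : ‖-(β⁻¹ • (gradient f y - gradient f x))‖ ^ 2
      = β⁻¹ ^ 2 * ‖gradient f y - gradient f x‖ ^ 2 := by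
    rw [norm_neg, norm_smul]
    simp [abs_of_nonneg (inv_nonneg.mpr hβ.le), mul_pow]
  rw [e1, e2] at hdesc
  have key : φ x ≤ φ y - 1 / (2 * β) * ‖gradient f y - gradient f x‖ ^ 2 := by
    have hb : β / 2 * (β⁻¹ ^ 2 * ‖gradient f y - gradient f x‖ ^ 2)
        = 1 / (2 * β) * ‖gradient f y - gradient f x‖ ^ 2 := by
      field_simp
    calc φ x ≤ φ z := hmin
      _ ≤ _ := hdesc
      _ = φ y - 1/(2*β) * ‖gradient f y - gradient f x‖^2 := by
          rw [hb]; field_simp; ring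
  have hφx : φ x = f x - ⟪gradient f x, x⟫ := rfl
  have hφy : φ y = f y - ⟪gradient f x, y⟫ := rfl
  rw [hφx, hφy] at key
  rw [inner_sub_right]
  linarith

lemma cocoercive {f : F → ℝ} (hc : ConvexOn ℝ Set.univ f) (hf : Differentiable ℝ f)
    {β : ℝ} (hβ : 0 < β)
    (hlip : ∀ a b : F, ‖gradient f a - gradient f b‖ ≤ β * ‖a - b‖) (x y : F) :
    β⁻¹ * ‖gradient f x - gradient f y‖ ^ 2 ≤ ⟪gradient f x - gradient f y, x - y⟫ := by
  have h1 := coco_half hc hf hβ hlip x y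
  have h2 := coco_half hc hf hβ hlip y x
  have hn : ‖gradient f x - gradient f y‖ = ‖gradient f y - gradient f x‖ := by
    rw [norm_sub_rev]
  have hi : ⟪gradient f x - gradient f y, x - y⟫
      = - ⟪gradient f x, y - x⟫ - ⟪gradient f y, x - y⟫ := by
    simp only [inner_sub_left, inner_sub_right]; ring
  rw [hi, hn]
  have hb : β⁻¹ = 1/(2*β) + 1/(2*β) := by field_simp; ring
  rw [hb]
  rw [norm_sub_rev] at h2
  linarith

lemma nonexp_of_coco {G : F → F} {β η : ℝ} (hβ : 0 < β) (hη0 : 0 ≤ η) (hηβ : η ≤ 2/β)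
    (hco : ∀ x y, β⁻¹ * ‖G x - G y‖^2 ≤ ⟪G x - G y, x - y⟫) (x y : F) :
    ‖(x - η • G x) - (y - η • G y)‖ ≤ ‖x - y‖ := by
  set a := x - y with ha
  set v := G x - G y with hvv
  have hrw : (x - η • G x) - (y - η • G y) = a - η • v := by
    rw [ha, hvv, smul_sub]; abel
  rw [hrw]
  have hsq : ‖a - η • v‖^2 ≤ ‖a‖^2 := by
    have hexp : ‖a - η • v‖^2 = ‖a‖^2 - 2 * (η * ⟪v, a⟫) + η^2 * ‖v‖^2 := by
      rw [norm_sub_sq_real, real_inner_smul_right, norm_smul]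
      simp [abs_of_nonneg hη0, mul_pow, real_inner_comm]
      try ring
    have hco' : β⁻¹ * ‖v‖^2 ≤ ⟪v, a⟫ := hco x y
    have h2 : η * (β⁻¹ * ‖v‖^2) ≤ η * ⟪v, a⟫ := by
      apply mul_le_mul_of_nonneg_left hco' hη0
    have h3 : η^2 * ‖v‖^2 ≤ 2 * (η * (β⁻¹ * ‖v‖^2)) := by
      have : η * η ≤ η * (2 * β⁻¹) := by
        apply mul_le_mul_of_nonneg_left _ hη0
        rw [div_eq_mul_inv] at hηβ
        exact hηβ
      nlinarith [sq_nonneg ‖v‖, norm_nonneg v]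
    nlinarith
  have := Real.sqrt_le_sqrt hsq
  rwa [Real.sqrt_sq (norm_nonneg _), Real.sqrt_sq (norm_nonneg _)] at this

lemma avg_coco {ι : Type*} [Fintype ι] {g : ι → F → F} {β : ℝ} (hβ : 0 < β)
    (hco : ∀ i x y, β⁻¹ * ‖g i x - g i y‖^2 ≤ ⟪g i x - g i y, x - y⟫)
    (hcard : 0 < Fintype.card ι) (x y : F) :
    β⁻¹ * ‖((Fintype.card ι : ℝ)⁻¹ • ∑ i, g i x) - ((Fintype.card ι : ℝ)⁻¹ • ∑ i, g i y)‖^2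
      ≤ ⟪((Fintype.card ι : ℝ)⁻¹ • ∑ i, g i x) - ((Fintype.card ι : ℝ)⁻¹ • ∑ i, g i y), x - y⟫ := by
  set M := (Fintype.card ι : ℝ) with hM
  have hM0 : 0 < M := by rw [hM]; exact_mod_cast hcard
  set D := ∑ i, (g i x - g i y) with hD
  have hDrw : (M⁻¹ • ∑ i, g i x) - (M⁻¹ • ∑ i, g i y) = M⁻¹ • D := by
    rw [hD, Finset.sum_sub_distrib, smul_sub]
  rw [hDrw]
  -- Jensen: ‖D‖^2 ≤ M * ∑ ‖g i x - g i y‖^2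
  have hjensen : ‖D‖^2 ≤ M * ∑ i, ‖g i x - g i y‖^2 := by
    have h1 : ‖D‖ ≤ ∑ i, ‖g i x - g i y‖ := norm_sum_le _ _
    have h2 : (∑ i, ‖g i x - g i y‖)^2 ≤ (Fintype.card ι : ℝ) * ∑ i, ‖g i x - g i y‖^2 := by
      simpa using sq_sum_le_card_mul_sum_sq (s := Finset.univ) (f := fun i => ‖g i x - g i y‖)
    calc ‖D‖^2 ≤ (∑ i, ‖g i x - g i y‖)^2 := by
          apply pow_le_pow_left₀ (norm_nonneg _) h1
      _ ≤ M * ∑ i, ‖g i x - g i y‖^2 := h2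
  have hsum : ∑ i, β⁻¹ * ‖g i x - g i y‖^2 ≤ ∑ i, ⟪g i x - g i y, x - y⟫ :=
    Finset.sum_le_sum fun i _ => hco i x y
  have hinner : ⟪M⁻¹ • D, x - y⟫ = M⁻¹ * ∑ i, ⟪g i x - g i y, x - y⟫ := by
    rw [real_inner_smul_left, hD, sum_inner]
  rw [hinner]
  have hnorm : ‖M⁻¹ • D‖^2 = M⁻¹^2 * ‖D‖^2 := by
    rw [norm_smul]
    simp [abs_of_nonneg (inv_nonneg.mpr hM0.le), mul_pow]
  rw [hnorm]
  have key : β⁻¹ * (M⁻¹^2 * ‖D‖^2) ≤ M⁻¹ * ∑ i, β⁻¹ * ‖g i x - g i y‖^2 := by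
    rw [← Finset.mul_sum]
    have : M⁻¹^2 * ‖D‖^2 ≤ M⁻¹ * ∑ i, ‖g i x - g i y‖^2 := by
      have := mul_le_mul_of_nonneg_left hjensen (by positivity : (0:ℝ) ≤ M⁻¹^2)
      calc M⁻¹^2 * ‖D‖^2 ≤ M⁻¹^2 * (M * ∑ i, ‖g i x - g i y‖^2) := this
        _ = M⁻¹ * ∑ i, ‖g i x - g i y‖^2 := by
            field_simp
    nlinarith [inv_nonneg.mpr hβ.le]
  calc β⁻¹ * (M⁻¹^2 * ‖D‖^2) ≤ M⁻¹ * ∑ i, β⁻¹ * ‖g i x - g i y‖^2 := key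
    _ ≤ M⁻¹ * ∑ i, ⟪g i x - g i y, x - y⟫ := by
        apply mul_le_mul_of_nonneg_left hsum (inv_nonneg.mpr hM0.le)

section L2
variable {E : Type*} [NormedAddCommGroup E]

lemma l2_triangle {m : ℕ} (a b : Fin m → E) :
    Real.sqrt (∑ i, ‖a i + b i‖^2) ≤ Real.sqrt (∑ i, ‖a i‖^2) + Real.sqrt (∑ i, ‖b i‖^2) := by
  let A : PiLp 2 (fun _ : Fin m => E) := (WithLp.equiv 2 _).symm a
  let B : PiLp 2 (fun _ : Fin m => E) := (WithLp.equiv 2 _).symm b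
  have hA : ∀ x : PiLp 2 (fun _ : Fin m => E), ‖x‖ = Real.sqrt (∑ i, ‖x i‖^2) := by
    intro x
    rw [← Real.sqrt_sq (norm_nonneg x), PiLp.norm_sq_eq_of_L2]
  have h1 : Real.sqrt (∑ i, ‖a i + b i‖^2) = ‖A + B‖ := by
    rw [hA]
    congr 1
  have h2 : Real.sqrt (∑ i, ‖a i‖^2) = ‖A‖ := by rw [hA]; rfl
  have h3 : Real.sqrt (∑ i, ‖b i‖^2) = ‖B‖ := by rw [hA]; rfl
  rw [h1, h2, h3]
  exact norm_add_le A B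

lemma sum_norm_le_sqrt {m : ℕ} (x : Fin m → E) :
    ∑ i, ‖x i‖ ≤ Real.sqrt m * Real.sqrt (∑ i, ‖x i‖^2) := by
  have h := sq_sum_le_card_mul_sum_sq (s := Finset.univ) (f := fun i => ‖x i‖)
  simp only [Finset.card_univ, Fintype.card_fin] at h
  have h0 : (0:ℝ) ≤ ∑ i, ‖x i‖ := Finset.sum_nonneg fun i _ => norm_nonneg _
  calc ∑ i, ‖x i‖ = Real.sqrt ((∑ i, ‖x i‖)^2) := (Real.sqrt_sq h0).symm
    _ ≤ Real.sqrt ((m:ℝ) * ∑ i, ‖x i‖^2) := Real.sqrt_le_sqrt h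
    _ = Real.sqrt m * Real.sqrt (∑ i, ‖x i‖^2) := Real.sqrt_mul (by positivity) _
end L2

lemma consensus_bound {E : Type*} [NormedAddCommGroup E] [Module ℝ E] [NormSMulClass ℝ E]
    {m : ℕ} (hm : 0 < m)
    (P : Fin m → Fin m → ℝ) (hPcol : ∀ l, ∑ i, P i l = 1) (hProw : ∀ i, ∑ l, P i l = 1)
    (lam : ℝ) (hlam0 : 0 ≤ lam) (hlam1 : lam < 1)
    (hcons : ∀ x : Fin m → E, ∑ i, x i = 0 →
      ∑ i, ‖∑ l, P i l • x l‖ ^ 2 ≤ lam ^ 2 * ∑ i, ‖x i‖ ^ 2)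
    (L ηc : ℝ) (hL : 0 ≤ L) (hηc0 : 0 ≤ ηc)
    (v : ℕ → Fin m → E) (G : ℕ → Fin m → E)
    (hG : ∀ t i, ‖G t i‖ ≤ L)
    (hv0 : ∀ i i', v 0 i = v 0 i')
    (hrec : ∀ t i, v (t+1) i = (∑ l, P i l • v t l) - ηc • G t i) :
    ∀ t, ∑ i, ‖v t i - (m:ℝ)⁻¹ • ∑ l, v t l‖ ≤ 2 * ηc * L * m / (1 - lam) := by
  have hm' : (0:ℝ) < m := by exact_mod_cast hm
  have hlamd : 0 < 1 - lam := by linarith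
  set x : ℕ → Fin m → E := fun t i => v t i - (m:ℝ)⁻¹ • ∑ l, v t l with hx
  have hsumx : ∀ t, ∑ i, x t i = 0 := by
    intro t
    simp only [hx, Finset.sum_sub_distrib, Finset.sum_const, Finset.card_univ,
      Fintype.card_fin]
    rw [sub_eq_zero, ← Nat.cast_smul_eq_nsmul ℝ, smul_smul]
    rw [mul_inv_cancel₀ (ne_of_gt hm'), one_smul]
  have hxrec : ∀ t i, x (t+1) i =
      (∑ l, P i l • x t l) + (-ηc) • (G t i - (m:ℝ)⁻¹ • ∑ l, G t l) := by
    intro t i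
    have havg : (m:ℝ)⁻¹ • ∑ l, v (t+1) l
        = (m:ℝ)⁻¹ • ∑ l, v t l - ((m:ℝ)⁻¹ * ηc) • ∑ l, G t l := by
      have hsum : ∑ i', v (t+1) i' = (∑ l, v t l) - ηc • ∑ l, G t l := by
        simp only [hrec]
        rw [Finset.sum_sub_distrib]
        congr 1
        · rw [Finset.sum_comm]
          simp only [← Finset.sum_smul, hPcol, one_smul]
        · rw [Finset.smul_sum]
      rw [hsum, smul_sub, smul_smul]
    simp only [hx]
    rw [hrec, havg]
    have hPx : ∑ l, P i l • x t l
        = (∑ l, P i l • v t l) - (m:ℝ)⁻¹ • ∑ l, v t l := by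
      simp only [hx, smul_sub]
      rw [Finset.sum_sub_distrib, ← Finset.sum_smul, hProw, one_smul]
    rw [hPx]
    rw [smul_sub, neg_smul, smul_smul]
    module
  set D : ℕ → ℝ := fun t => Real.sqrt (∑ i, ‖x t i‖^2) with hD
  have hD0 : D 0 = 0 := by
    have : ∀ i, x 0 i = 0 := by
      intro i
      simp only [hx]
      rw [sub_eq_zero]
      have : ∑ l, v 0 l = (m:ℕ) • v 0 i := by
        rw [Finset.sum_congr rfl fun l _ => hv0 l i]
        simp
      rw [this, ← Nat.cast_smul_eq_nsmul ℝ, smul_smul, inv_mul_cancel₀ (ne_of_gt hm'), one_smul]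
    simp [hD, this]
  have hDrec : ∀ t, D (t+1) ≤ lam * D t + 2 * ηc * L * Real.sqrt m := by
    intro t
    have htri := l2_triangle (fun i => ∑ l, P i l • x t l)
      (fun i => (-ηc) • (G t i - (m:ℝ)⁻¹ • ∑ l, G t l))
    have hDt1 : D (t+1) = Real.sqrt (∑ i, ‖(∑ l, P i l • x t l)
        + (-ηc) • (G t i - (m:ℝ)⁻¹ • ∑ l, G t l)‖^2) := by
      simp only [hD, hxrec]
    rw [hDt1]
    have h1 : Real.sqrt (∑ i, ‖∑ l, P i l • x t l‖^2) ≤ lam * D t := by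
      have := hcons (x t) (hsumx t)
      calc Real.sqrt (∑ i, ‖∑ l, P i l • x t l‖^2)
          ≤ Real.sqrt (lam^2 * ∑ i, ‖x t i‖^2) := Real.sqrt_le_sqrt this
        _ = lam * D t := by
            rw [Real.sqrt_mul (by positivity), Real.sqrt_sq hlam0]
    have hGbar : ∀ i, ‖G t i - (m:ℝ)⁻¹ • ∑ l, G t l‖ ≤ 2 * L := by
      intro i
      calc ‖G t i - (m:ℝ)⁻¹ • ∑ l, G t l‖ ≤ ‖G t i‖ + ‖(m:ℝ)⁻¹ • ∑ l, G t l‖ :=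
            norm_sub_le _ _
        _ ≤ L + L := by
            apply add_le_add (hG t i)
            rw [norm_smul]
            have : ‖∑ l, G t l‖ ≤ (m:ℝ) * L := by
              calc ‖∑ l, G t l‖ ≤ ∑ l, ‖G t l‖ := norm_sum_le _ _
                _ ≤ ∑ _l : Fin m, L := Finset.sum_le_sum fun l _ => hG t l
                _ = (m:ℝ) * L := by simp [mul_comm]
            calc ‖(m:ℝ)⁻¹‖ * ‖∑ l, G t l‖ ≤ (m:ℝ)⁻¹ * ((m:ℝ) * L) := by
                  rw [Real.norm_eq_abs, abs_of_nonneg (by positivity)]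
                  exact mul_le_mul_of_nonneg_left this (by positivity)
              _ = L := by field_simp
        _ = 2 * L := by ring
    have h2 : Real.sqrt (∑ i, ‖(-ηc) • (G t i - (m:ℝ)⁻¹ • ∑ l, G t l)‖^2)
        ≤ 2 * ηc * L * Real.sqrt m := by
      have hb : ∀ i : Fin m, ‖(-ηc) • (G t i - (m:ℝ)⁻¹ • ∑ l, G t l)‖^2 ≤ (ηc * (2*L))^2 := by
        intro i
        rw [norm_smul, norm_neg, Real.norm_eq_abs, abs_of_nonneg hηc0]
        have := hGbar i
        have h0 : (0:ℝ) ≤ ηc * ‖G t i - (m:ℝ)⁻¹ • ∑ l, G t l‖ := by positivity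
        apply pow_le_pow_left₀ h0
        exact mul_le_mul_of_nonneg_left this hηc0
      calc Real.sqrt (∑ i, ‖(-ηc) • (G t i - (m:ℝ)⁻¹ • ∑ l, G t l)‖^2)
          ≤ Real.sqrt (∑ _i : Fin m, (ηc * (2*L))^2) :=
            Real.sqrt_le_sqrt (Finset.sum_le_sum fun i _ => hb i)
        _ = Real.sqrt ((m:ℝ) * (ηc * (2*L))^2) := by
            rw [Finset.sum_const]; simp [nsmul_eq_mul]
        _ = Real.sqrt m * (ηc * (2*L)) := by
            rw [Real.sqrt_mul (by positivity), Real.sqrt_sq (by positivity)]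
        _ = 2 * ηc * L * Real.sqrt m := by ring
    calc Real.sqrt (∑ i, ‖(∑ l, P i l • x t l)
        + (-ηc) • (G t i - (m:ℝ)⁻¹ • ∑ l, G t l)‖^2) ≤ _ := htri
      _ ≤ lam * D t + 2 * ηc * L * Real.sqrt m := add_le_add h1 h2
  have hDbound : ∀ t, D t ≤ 2 * ηc * L * Real.sqrt m / (1 - lam) := by
    intro t
    induction t with
    | zero => rw [hD0]; positivity
    | succ t ih =>
      calc D (t+1) ≤ lam * D t + 2 * ηc * L * Real.sqrt m := hDrec t
        _ ≤ lam * (2 * ηc * L * Real.sqrt m / (1 - lam)) + 2 * ηc * L * Real.sqrt m := by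
            apply add_le_add_left
            exact mul_le_mul_of_nonneg_left ih hlam0
        _ = 2 * ηc * L * Real.sqrt m / (1 - lam) := by
            field_simp
            ring
  intro t
  calc ∑ i, ‖v t i - (m:ℝ)⁻¹ • ∑ l, v t l‖ = ∑ i, ‖x t i‖ := rfl
    _ ≤ Real.sqrt m * D t := sum_norm_le_sqrt _
    _ ≤ Real.sqrt m * (2 * ηc * L * Real.sqrt m / (1 - lam)) := by
        apply mul_le_mul_of_nonneg_left (hDbound t) (Real.sqrt_nonneg _)
    _ = 2 * ηc * L * m / (1 - lam) := by
        rw [show Real.sqrt m * (2 * ηc * L * Real.sqrt m / (1 - lam))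
          = (Real.sqrt m * Real.sqrt m) * (2 * ηc * L) / (1-lam) by ring,
          Real.mul_self_sqrt (by positivity)]
        ring

lemma avg_step {E : Type*} [AddCommGroup E] [Module ℝ E] {m : ℕ}
    (P : Fin m → Fin m → ℝ) (hPcol : ∀ l, ∑ i, P i l = 1)
    (w u : Fin m → E) (c : ℝ) :
    (m:ℝ)⁻¹ • ∑ i, ((∑ l, P i l • w l) - c • u i)
      = (m:ℝ)⁻¹ • ∑ i, w i - (c * (m:ℝ)⁻¹) • ∑ i, u i := by
  rw [Finset.sum_sub_distrib, smul_sub]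
  congr 1
  · congr 1
    rw [Finset.sum_comm]
    simp only [← Finset.sum_smul, hPcol, one_smul]
  · rw [← Finset.smul_sum, smul_smul, mul_comm]

end DSGDAux

open scoped RealInnerProductSpace

set_option maxHeartbeats 1000000 in
theorem stmt_7 (d m n : ℕ) (hd : 1 ≤ d) (hm : 1 ≤ m) (hn : 1 ≤ n)
    {Z : Type*} (f : EuclideanSpace ℝ (Fin d) → Z → ℝ)
    (L : ℝ) (hL : 0 < L)
    (hconv : ∀ z : Z, ConvexOn ℝ Set.univ (fun w => f w z))
    (hdiff : ∀ z : Z, Differentiable ℝ (fun w => f w z))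
    (hgrad : ∀ (z : Z) (w : EuclideanSpace ℝ (Fin d)),
      ‖gradient (fun w' => f w' z) w‖ ≤ L)
    (β : ℝ) (hβ : 0 < β)
    (hsmooth : ∀ (z : Z) (w w' : EuclideanSpace ℝ (Fin d)),
      ‖gradient (fun u => f u z) w - gradient (fun u => f u z) w'‖ ≤ β * ‖w - w'‖)
    (P : Fin m → Fin m → ℝ)
    (hPsymm : ∀ i l, P i l = P l i)
    (hPnonneg : ∀ i l, 0 ≤ P i l)
    (hProw : ∀ i, ∑ l, P i l = 1)
    (lam : ℝ) (hlam0 : 0 ≤ lam) (hlam1 : lam < 1)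
    (hcons : ∀ x : Fin m → EuclideanSpace ℝ (Fin d), ∑ i, x i = 0 →
      ∑ i, ‖∑ l, P i l • x l‖ ^ 2 ≤ lam ^ 2 * ∑ i, ‖x i‖ ^ 2)
    (S S' : Fin m → Fin n → Z) (j : ℕ → Fin m → Fin n)
    (η : ℕ → ℝ) (hη : ∀ t, 0 ≤ η t)
    (ηc : ℝ) (hηc0 : 0 ≤ ηc) (hηcβ : ηc ≤ 2 / β)
    (hηconst : ∀ t, 1 ≤ t → η t = ηc)
    (w0 : EuclideanSpace ℝ (Fin d))
    (wS : ℕ → Fin m → EuclideanSpace ℝ (Fin d))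
    (hwS0 : ∀ i, wS 0 i = w0)
    (hwSrec : ∀ t i, wS (t + 1) i =
      (∑ l, P i l • wS t l) -
        η (t + 1) • gradient (fun w => f w (S i (j (t + 1) i))) (wS t i))
    (wSrk : Fin m → Fin n → ℕ → Fin m → EuclideanSpace ℝ (Fin d))
    (hwSrk0 : ∀ r k i, wSrk r k 0 i = w0)
    (hwSrkrec : ∀ r k t i, wSrk r k (t + 1) i =
      (∑ l, P i l • wSrk r k t l) -
        η (t + 1) • gradient
          (fun w => f w (if i = r ∧ j (t + 1) i = k then S' r k
            else S i (j (t + 1) i))) (wSrk r k t i))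
    (T : ℕ) (hT : 1 ≤ T) :
    (1 / ((m : ℝ) * n)) * ∑ r : Fin m, ∑ k : Fin n,
        ‖((m : ℝ)⁻¹ • ∑ i, wS T i) - ((m : ℝ)⁻¹ • ∑ i, wSrk r k T i)‖
      ≤ 4 * ηc ^ 2 * β * L * T / (1 - lam) + 2 * ηc * L * T / ((m : ℝ) * n) := by
  have hm' : (0:ℝ) < m := by exact_mod_cast hm
  have hn' : (0:ℝ) < n := by exact_mod_cast hn
  have hlamd : (0:ℝ) < 1 - lam := by linarith
  set g : Z → EuclideanSpace ℝ (Fin d) → EuclideanSpace ℝ (Fin d) :=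
    fun z w => gradient (fun u => f u z) w with hg
  have hPcol : ∀ l, ∑ i, P i l = 1 := fun l => by
    rw [Finset.sum_congr rfl fun i _ => hPsymm i l]
    exact hProw l
  -- recursions with constant stepsize
  have hrecS : ∀ t i, wS (t+1) i =
      (∑ l, P i l • wS t l) - ηc • g (S i (j (t+1) i)) (wS t i) := by
    intro t i
    rw [hwSrec, hηconst (t+1) (by omega)]
  have hrecS' : ∀ r k t i, wSrk r k (t+1) i =
      (∑ l, P i l • wSrk r k t l) -
        ηc • g (if i = r ∧ j (t+1) i = k then S' r k else S i (j (t+1) i)) (wSrk r k t i) := by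
    intro r k t i
    rw [hwSrkrec, hηconst (t+1) (by omega)]
  -- consensus bounds
  have hCS : ∀ t, ∑ i, ‖wS t i - (m:ℝ)⁻¹ • ∑ l, wS t l‖ ≤ 2 * ηc * L * m / (1 - lam) :=
    consensus_bound hm P hPcol hProw lam hlam0 hlam1 hcons L ηc hL.le hηc0 wS
      (fun t i => g (S i (j (t+1) i)) (wS t i)) (fun t i => hgrad _ _)
      (fun i i' => by rw [hwS0, hwS0]) hrecS
  have hCS' : ∀ r k t, ∑ i, ‖wSrk r k t i - (m:ℝ)⁻¹ • ∑ l, wSrk r k t l‖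
      ≤ 2 * ηc * L * m / (1 - lam) := fun r k =>
    consensus_bound hm P hPcol hProw lam hlam0 hlam1 hcons L ηc hL.le hηc0 (wSrk r k)
      (fun t i => g (if i = r ∧ j (t+1) i = k then S' r k else S i (j (t+1) i)) (wSrk r k t i))
      (fun t i => hgrad _ _) (fun i i' => by rw [hwSrk0, hwSrk0]) (hrecS' r k)
  -- per-(r,k) telescoped bound
  have main : ∀ (r : Fin m) (k : Fin n) (t : ℕ),
      ‖((m:ℝ)⁻¹ • ∑ i, wS t i) - ((m:ℝ)⁻¹ • ∑ i, wSrk r k t i)‖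
        ≤ 4 * ηc^2 * β * L / (1 - lam) * t
          + (2 * ηc * L / m) * ∑ s ∈ Finset.range t, (if j (s+1) r = k then (1:ℝ) else 0) := by
    intro r k t
    induction t with
    | zero =>
      have : ∀ i, wS 0 i = wSrk r k 0 i := fun i => by rw [hwS0, hwSrk0]
      simp [Finset.sum_congr rfl fun i _ => this i]
    | succ t ih =>
      set wbar := (m:ℝ)⁻¹ • ∑ i, wS t i with hwbar
      set wbar' := (m:ℝ)⁻¹ • ∑ i, wSrk r k t i with hwbar'
      set z : Fin m → Z := fun i => S i (j (t+1) i) with hz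
      set c : ℝ := ηc * (m:ℝ)⁻¹ with hc
      have hc0 : 0 ≤ c := by positivity
      set gS : Fin m → EuclideanSpace ℝ (Fin d) := fun i => g (z i) (wS t i) with hgS
      set gS' : Fin m → EuclideanSpace ℝ (Fin d) := fun i =>
        g (if i = r ∧ j (t+1) i = k then S' r k else z i) (wSrk r k t i) with hgS'
      set aS : Fin m → EuclideanSpace ℝ (Fin d) := fun i => g (z i) wbar with haS
      set aS' : Fin m → EuclideanSpace ℝ (Fin d) := fun i => g (z i) wbar' with haS'
      -- average recursions
      have havgS : (m:ℝ)⁻¹ • ∑ i, wS (t+1) i = wbar - c • ∑ i, gS i := by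
        rw [Finset.sum_congr rfl fun i _ => hrecS t i]
        exact avg_step P hPcol _ _ _
      have havgS' : (m:ℝ)⁻¹ • ∑ i, wSrk r k (t+1) i = wbar' - c • ∑ i, gS' i := by
        rw [Finset.sum_congr rfl fun i _ => hrecS' r k t i]
        exact avg_step P hPcol _ _ _
      -- decomposition
      have hdecomp : ((m:ℝ)⁻¹ • ∑ i, wS (t+1) i) - ((m:ℝ)⁻¹ • ∑ i, wSrk r k (t+1) i)
          = ((wbar - c • ∑ i, aS i) - (wbar' - c • ∑ i, aS' i))
            - c • ∑ i, (gS i - aS i) + c • ∑ i, (gS' i - aS' i) := by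
        rw [havgS, havgS', Finset.sum_sub_distrib, Finset.sum_sub_distrib,
          smul_sub, smul_sub]
        abel
      -- nonexpansiveness of the averaged gradient step
      have hAB : ‖(wbar - c • ∑ i, aS i) - (wbar' - c • ∑ i, aS' i)‖ ≤ ‖wbar - wbar'‖ := by
        set G : EuclideanSpace ℝ (Fin d) → EuclideanSpace ℝ (Fin d) :=
          fun w => (m:ℝ)⁻¹ • ∑ i, g (z i) w with hG
        have hco : ∀ x y, β⁻¹ * ‖G x - G y‖^2 ≤ ⟪G x - G y, x - y⟫ := by
          intro x y
          have := avg_coco (ι := Fin m) (g := fun i w => g (z i) w) hβ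
            (fun i x y => cocoercive (hconv (z i)) (hdiff (z i)) hβ (hsmooth (z i)) x y)
            (by simp; omega) x y
          simpa [hG] using this
        have hrw1 : c • ∑ i, aS i = ηc • G wbar := by
          rw [hG, hc, ← smul_smul]
        have hrw2 : c • ∑ i, aS' i = ηc • G wbar' := by
          rw [hG, hc, ← smul_smul]
        rw [hrw1, hrw2]
        exact nonexp_of_coco hβ hηc0 hηcβ hco wbar wbar'
      -- smoothness bounds
      have hb1 : ‖∑ i, (gS i - aS i)‖ ≤ β * ∑ i, ‖wS t i - wbar‖ := by
        calc ‖∑ i, (gS i - aS i)‖ ≤ ∑ i, ‖gS i - aS i‖ := norm_sum_le _ _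
          _ ≤ ∑ i, β * ‖wS t i - wbar‖ :=
              Finset.sum_le_sum fun i _ => hsmooth (z i) (wS t i) wbar
          _ = β * ∑ i, ‖wS t i - wbar‖ := by rw [Finset.mul_sum]
      have hb2 : ‖∑ i, (gS' i - aS' i)‖
          ≤ β * ∑ i, ‖wSrk r k t i - wbar'‖ + (if j (t+1) r = k then 2*L else 0) := by
        have hper : ∀ i : Fin m, ‖gS' i - aS' i‖
            ≤ β * ‖wSrk r k t i - wbar'‖
              + (if i = r ∧ j (t+1) i = k then 2*L else 0) := by
          intro i
          by_cases h : i = r ∧ j (t+1) i = k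
          · simp only [hgS', haS']
            rw [if_pos h, if_pos h]
            calc ‖g (S' r k) (wSrk r k t i) - g (z i) wbar'‖
                ≤ ‖g (S' r k) (wSrk r k t i) - g (S' r k) wbar'‖
                  + ‖g (S' r k) wbar' - g (z i) wbar'‖ := norm_sub_le_norm_sub_add_norm_sub _ _ _
              _ ≤ β * ‖wSrk r k t i - wbar'‖ + (‖g (S' r k) wbar'‖ + ‖g (z i) wbar'‖) := by
                  apply add_le_add (hsmooth (S' r k) _ _)
                  exact norm_sub_le _ _
              _ ≤ β * ‖wSrk r k t i - wbar'‖ + 2*L := by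
                  have h1 := hgrad (S' r k) wbar'
                  have h2 := hgrad (z i) wbar'
                  apply add_le_add_right
                  rw [hg] at *
                  linarith
          · simp only [hgS', haS', h, if_neg, if_false]
            have := hsmooth (z i) (wSrk r k t i) wbar'
            simpa using this
        calc ‖∑ i, (gS' i - aS' i)‖ ≤ ∑ i, ‖gS' i - aS' i‖ := norm_sum_le _ _
          _ ≤ ∑ i, (β * ‖wSrk r k t i - wbar'‖
              + (if i = r ∧ j (t+1) i = k then 2*L else 0)) :=
              Finset.sum_le_sum fun i _ => hper i
          _ = β * ∑ i, ‖wSrk r k t i - wbar'‖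
              + (if j (t+1) r = k then 2*L else 0) := by
              rw [Finset.sum_add_distrib, Finset.mul_sum]
              congr 1
              have : ∀ i : Fin m, (if i = r ∧ j (t+1) i = k then (2*L:ℝ) else 0)
                  = if i = r then (if j (t+1) r = k then 2*L else 0) else 0 := by
                intro i
                by_cases h : i = r <;> simp [h]
              rw [Finset.sum_congr rfl fun i _ => this i, Finset.sum_ite_eq']
              simp
      -- per-step bound
      have hstep : ‖((m:ℝ)⁻¹ • ∑ i, wS (t+1) i) - ((m:ℝ)⁻¹ • ∑ i, wSrk r k (t+1) i)‖
          ≤ ‖wbar - wbar'‖ + 4 * ηc^2 * β * L / (1 - lam)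
            + (2 * ηc * L / m) * (if j (t+1) r = k then 1 else 0) := by
        rw [hdecomp]
        have htri : ‖((wbar - c • ∑ i, aS i) - (wbar' - c • ∑ i, aS' i))
            - c • ∑ i, (gS i - aS i) + c • ∑ i, (gS' i - aS' i)‖
            ≤ ‖(wbar - c • ∑ i, aS i) - (wbar' - c • ∑ i, aS' i)‖
              + ‖c • ∑ i, (gS i - aS i)‖ + ‖c • ∑ i, (gS' i - aS' i)‖ := by
          calc _ ≤ ‖((wbar - c • ∑ i, aS i) - (wbar' - c • ∑ i, aS' i))
              - c • ∑ i, (gS i - aS i)‖ + ‖c • ∑ i, (gS' i - aS' i)‖ := norm_add_le _ _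
            _ ≤ _ := by
                apply add_le_add_left
                exact norm_sub_le _ _
        have hn1 : ‖c • ∑ i, (gS i - aS i)‖ ≤ c * (β * (2 * ηc * L * m / (1 - lam))) := by
          rw [norm_smul, Real.norm_eq_abs, abs_of_nonneg hc0]
          apply mul_le_mul_of_nonneg_left _ hc0
          calc ‖∑ i, (gS i - aS i)‖ ≤ β * ∑ i, ‖wS t i - wbar‖ := hb1
            _ ≤ β * (2 * ηc * L * m / (1 - lam)) :=
                mul_le_mul_of_nonneg_left (hCS t) hβ.le
        have hn2 : ‖c • ∑ i, (gS' i - aS' i)‖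
            ≤ c * (β * (2 * ηc * L * m / (1 - lam)) + (if j (t+1) r = k then 2*L else 0)) := by
          rw [norm_smul, Real.norm_eq_abs, abs_of_nonneg hc0]
          apply mul_le_mul_of_nonneg_left _ hc0
          calc ‖∑ i, (gS' i - aS' i)‖
              ≤ β * ∑ i, ‖wSrk r k t i - wbar'‖ + (if j (t+1) r = k then 2*L else 0) := hb2
            _ ≤ β * (2 * ηc * L * m / (1 - lam)) + (if j (t+1) r = k then 2*L else 0) := by
                apply add_le_add_left
                exact mul_le_mul_of_nonneg_left (hCS' r k t) hβ.le
        have hcsimp : c * (β * (2 * ηc * L * m / (1 - lam))) = 2 * ηc^2 * β * L / (1 - lam) := by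
          rw [hc]
          field_simp
        have hhit : c * (if j (t+1) r = k then (2*L:ℝ) else 0)
            = (2 * ηc * L / m) * (if j (t+1) r = k then 1 else 0) := by
          rw [hc]
          by_cases h : j (t+1) r = k <;> simp [h] <;> field_simp <;> ring
        calc _ ≤ _ := htri
          _ ≤ ‖wbar - wbar'‖ + c * (β * (2 * ηc * L * m / (1 - lam)))
              + (c * (β * (2 * ηc * L * m / (1 - lam)))
                + c * (if j (t+1) r = k then 2*L else 0)) := by
              apply add_le_add (add_le_add hAB hn1)
              rw [mul_add] at hn2
              exact hn2
          _ = ‖wbar - wbar'‖ + 4 * ηc^2 * β * L / (1 - lam)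
              + (2 * ηc * L / m) * (if j (t+1) r = k then 1 else 0) := by
              rw [hcsimp, hhit]
              ring
      -- combine with induction hypothesis
      rw [Finset.sum_range_succ]
      push_cast
      calc ‖((m:ℝ)⁻¹ • ∑ i, wS (t+1) i) - ((m:ℝ)⁻¹ • ∑ i, wSrk r k (t+1) i)‖
          ≤ ‖wbar - wbar'‖ + 4 * ηc^2 * β * L / (1 - lam)
            + (2 * ηc * L / m) * (if j (t+1) r = k then 1 else 0) := hstep
        _ ≤ (4 * ηc^2 * β * L / (1 - lam) * t
              + (2 * ηc * L / m) * ∑ s ∈ Finset.range t, (if j (s+1) r = k then (1:ℝ) else 0))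
            + 4 * ηc^2 * β * L / (1 - lam)
            + (2 * ηc * L / m) * (if j (t+1) r = k then 1 else 0) := by
            apply add_le_add_left
            apply add_le_add_left
            exact ih
        _ = 4 * ηc^2 * β * L / (1 - lam) * (t + 1)
            + (2 * ηc * L / m) * ((∑ s ∈ Finset.range t, (if j (s+1) r = k then (1:ℝ) else 0))
              + (if j (t+1) r = k then 1 else 0)) := by
            ring
  -- final averaging over r, k
  have hsum_hits : ∀ (r : Fin m) (s : ℕ),
      ∑ k : Fin n, (if j (s+1) r = k then (1:ℝ) else 0) = 1 := by
    intro r s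
    rw [Finset.sum_ite_eq]
    simp
  have hfinal : ∑ r : Fin m, ∑ k : Fin n,
      ‖((m:ℝ)⁻¹ • ∑ i, wS T i) - ((m:ℝ)⁻¹ • ∑ i, wSrk r k T i)‖
      ≤ (m*n) * (4 * ηc^2 * β * L / (1 - lam) * T) + (2 * ηc * L / m) * (m * T) := by
    calc ∑ r : Fin m, ∑ k : Fin n,
        ‖((m:ℝ)⁻¹ • ∑ i, wS T i) - ((m:ℝ)⁻¹ • ∑ i, wSrk r k T i)‖
        ≤ ∑ r : Fin m, ∑ k : Fin n, (4 * ηc^2 * β * L / (1 - lam) * T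
            + (2 * ηc * L / m) * ∑ s ∈ Finset.range T, (if j (s+1) r = k then (1:ℝ) else 0)) :=
          Finset.sum_le_sum fun r _ => Finset.sum_le_sum fun k _ => main r k T
      _ = (m*n) * (4 * ηc^2 * β * L / (1 - lam) * T) + (2 * ηc * L / m) * (m * T) := by
          have hrow : ∀ r : Fin m, ∑ k : Fin n, (4 * ηc^2 * β * L / (1 - lam) * T
              + (2 * ηc * L / m) * ∑ s ∈ Finset.range T, (if j (s+1) r = k then (1:ℝ) else 0))
              = n * (4 * ηc^2 * β * L / (1 - lam) * T) + (2 * ηc * L / m) * T := by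
            intro r
            rw [Finset.sum_add_distrib, Finset.sum_const, ← Finset.mul_sum]
            have : ∑ k : Fin n, ∑ s ∈ Finset.range T,
                (if j (s+1) r = k then (1:ℝ) else 0) = T := by
              rw [Finset.sum_comm]
              rw [Finset.sum_congr rfl fun s _ => hsum_hits r s]
              simp
            rw [this]
            simp [nsmul_eq_mul]
          rw [Finset.sum_congr rfl fun r _ => hrow r, Finset.sum_const]
          simp only [Finset.card_univ, Fintype.card_fin, nsmul_eq_mul]
          ring
  have hms : (0:ℝ) < (m:ℝ) * n := by positivity
  have h1 := mul_le_mul_of_nonneg_left hfinal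
    (by positivity : (0:ℝ) ≤ 1/((m:ℝ)*n))
  have heq : (1/((m:ℝ)*n)) * (((m:ℝ)*n) * (4 * ηc^2 * β * L / (1 - lam) * T)
      + (2 * ηc * L / m) * (m * T))
      = 4 * ηc ^ 2 * β * L * T / (1 - lam) + 2 * ηc * L * T / ((m:ℝ) * n) := by
    field_simp
  exact h1.trans_eq heq
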